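/- Key norm estimate in the over-approximation proof: if Z̄ = 𝐀^{-1/2}𝚼𝐐^{1/2} + λΔ/‖Δ‖ with 𝚼ᵀ𝚼 ⪯ I, 𝐀 ≻ 0, 𝐐 ⪰ 0, 0 ≤ λ ≤ γ, Δ ≠ 0, then Z̄ᵀ𝐀Z̄ ⪯ 𝐐 + (2γ‖𝐀‖^{1/2}‖𝐐‖^{1/2} + γ²‖𝐀‖) Iₙ. -/

import Mathlib

/-! Write 𝐀 = S² with S = 𝐀^{1/2}, and R = 𝐐^{1/2}. Then Z̄ᵀ𝐀Z̄ = (SZ̄)ᵀ(SZ̄) and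
SZ̄ = 𝚼R + SE with E = λΔ/‖Δ‖, so ‖E‖ ≤ λ ≤ γ. As 𝚼 is a contraction and
‖SE‖ ≤ γ‖𝐀‖^{1/2} =: g, we get ‖SZ̄x‖ ≤ ‖Rx‖ + g‖x‖; squaring and bounding the cross term
by ‖Rx‖ ≤ ‖𝐐‖^{1/2}‖x‖ gives ‖SZ̄x‖² ≤ xᵀ𝐐x + (2g‖𝐐‖^{1/2} + g²)‖x‖². -/

open Matrix

noncomputable def opNorm {m n : Type*} [Fintype m] [Fintype n] [DecidableEq n]
    (M : Matrix m n ℝ) : ℝ :=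
  ‖LinearMap.toContinuousLinearMap (Matrix.toEuclideanLin M)‖

noncomputable def Matrix.PosSemidef.sqrt {n : Type*} [Fintype n] [DecidableEq n]
    {A : Matrix n n ℝ} (hA : A.PosSemidef) : Matrix n n ℝ :=
  (hA.1.eigenvectorUnitary : Matrix n n ℝ) * diagonal ((↑) ∘ (Real.sqrt ·) ∘ hA.1.eigenvalues) *
    (star (hA.1.eigenvectorUnitary : Matrix n n ℝ))

open WithLp
open scoped Matrix.Norms.L2Operator

lemma norm_div_norm_smul_le {E : Type*} [SeminormedAddCommGroup E] [NormedSpace ℝ E]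
    (c : ℝ) (x : E) : ‖(c / ‖x‖) • x‖ ≤ |c| := by
  rcases eq_or_ne ‖x‖ 0 with hx | hx
  · simp [hx]
  · rw [norm_smul, Real.norm_eq_abs, abs_div, abs_norm, div_mul_cancel₀ _ hx]

namespace Matrix

variable {m n : Type*} [Fintype m] [Fintype n]

lemma opNorm_eq_l2_opNorm [DecidableEq n] (M : Matrix m n ℝ) : opNorm M = ‖M‖ := rfl

lemma dotProduct_self_eq_norm_sq (x : n → ℝ) : x ⬝ᵥ x = ‖toLp 2 x‖ ^ 2 := by
  rw [← real_inner_self_eq_norm_sq, EuclideanSpace.inner_toLp_toLp, star_trivial]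

lemma dotProduct_transpose_mul_self_mulVec (M : Matrix m n ℝ) (x : n → ℝ) :
    x ⬝ᵥ (Mᵀ * M) *ᵥ x = ‖toLp 2 (M *ᵥ x)‖ ^ 2 := by
  rw [← mulVec_mulVec, dotProduct_mulVec, vecMul_transpose, dotProduct_self_eq_norm_sq]

lemma norm_mulVec_le_of_posSemidef_one_sub [DecidableEq n] {M : Matrix m n ℝ}
    (hM : (1 - Mᵀ * M).PosSemidef) (x : n → ℝ) : ‖toLp 2 (M *ᵥ x)‖ ≤ ‖toLp 2 x‖ := by
  have h := hM.dotProduct_mulVec_nonneg x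
  rw [star_trivial, sub_mulVec, one_mulVec, dotProduct_sub, dotProduct_self_eq_norm_sq,
    dotProduct_transpose_mul_self_mulVec, sub_nonneg] at h
  exact pow_le_pow_iff_left₀ (norm_nonneg _) (norm_nonneg _) two_ne_zero |>.mp h

lemma norm_mul_add_mulVec_le_of_posSemidef_one_sub [DecidableEq n] {Υ : Matrix m n ℝ}
    (hΥ : (1 - Υᵀ * Υ).PosSemidef) (R : Matrix n n ℝ) (F : Matrix m n ℝ) (x : n → ℝ) :
    ‖toLp 2 ((Υ * R + F) *ᵥ x)‖ ≤ ‖toLp 2 (R *ᵥ x)‖ + ‖F‖ * ‖toLp 2 x‖ := by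
  rw [add_mulVec, ← mulVec_mulVec, toLp_add]
  exact (norm_add_le _ _).trans <|
    add_le_add (norm_mulVec_le_of_posSemidef_one_sub hΥ _) (F.l2_opNorm_mulVec (toLp 2 x))

lemma posSemidef_sub_transpose_mul_self_of_norm_mulVec_le [DecidableEq n] {M : Matrix m n ℝ}
    {R : Matrix n n ℝ} {g : ℝ} (hg : 0 ≤ g)
    (h : ∀ x, ‖toLp 2 (M *ᵥ x)‖ ≤ ‖toLp 2 (R *ᵥ x)‖ + g * ‖toLp 2 x‖) :
    (Rᵀ * R + (2 * g * ‖R‖ + g ^ 2) • 1 - Mᵀ * M).PosSemidef := by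
  refine posSemidef_iff_dotProduct_mulVec.mpr ⟨?_, fun x ↦ ?_⟩
  · exact ((isHermitian_conjTranspose_mul_self R).add
      (isHermitian_one.smul (IsSelfAdjoint.all _))).sub (isHermitian_conjTranspose_mul_self M)
  · rw [star_trivial, sub_mulVec, add_mulVec, smul_mulVec, one_mulVec, dotProduct_sub,
      dotProduct_add, dotProduct_smul, smul_eq_mul, dotProduct_self_eq_norm_sq,
      dotProduct_transpose_mul_self_mulVec, dotProduct_transpose_mul_self_mulVec, sub_nonneg]
    have hR : ‖toLp 2 (R *ᵥ x)‖ ≤ ‖R‖ * ‖toLp 2 x‖ := R.l2_opNorm_mulVec (toLp 2 x)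
    calc ‖toLp 2 (M *ᵥ x)‖ ^ 2 ≤ (‖toLp 2 (R *ᵥ x)‖ + g * ‖toLp 2 x‖) ^ 2 :=
          pow_le_pow_left₀ (norm_nonneg _) (h x) 2
      _ ≤ _ := by
        nlinarith [mul_le_mul_of_nonneg_left hR (by positivity : 0 ≤ 2 * g * ‖toLp 2 x‖)]

end Matrix

namespace Matrix.PosSemidef

variable {n : Type*} [Fintype n] [DecidableEq n] {A : Matrix n n ℝ}

lemma transpose_sqrt (hA : A.PosSemidef) : hA.sqrtᵀ = hA.sqrt := by
  simp [sqrt, transpose_mul, star_eq_conjTranspose, conjTranspose_eq_transpose_of_trivial,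
    Matrix.mul_assoc]

lemma sqrt_mul_self (hA : A.PosSemidef) : hA.sqrt * hA.sqrt = A := by
  set U : Matrix n n ℝ := (hA.1.eigenvectorUnitary : Matrix n n ℝ)
  have hU : star U * U = 1 := Unitary.coe_star_mul_self _
  have hdiag : diagonal (((↑) ∘ (Real.sqrt ·) ∘ hA.1.eigenvalues) : n → ℝ) *
      diagonal ((↑) ∘ (Real.sqrt ·) ∘ hA.1.eigenvalues) =
        diagonal (RCLike.ofReal ∘ hA.1.eigenvalues) := by
    rw [diagonal_mul_diagonal]
    congr with i
    simp [Real.mul_self_sqrt (hA.eigenvalues_nonneg i)]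
  conv_rhs => rw [hA.1.spectral_theorem, Unitary.conjStarAlgAut_apply]
  simp only [sqrt, Matrix.mul_assoc]
  congr 1
  simp only [← Matrix.mul_assoc]
  rw [Matrix.mul_assoc _ (star U) U, hU, Matrix.mul_one, hdiag]

lemma transpose_sqrt_mul_sqrt (hA : A.PosSemidef) : hA.sqrtᵀ * hA.sqrt = A := by
  rw [hA.transpose_sqrt, hA.sqrt_mul_self]

lemma l2_opNorm_sqrt (hA : A.PosSemidef) : ‖hA.sqrt‖ = √‖A‖ := by
  conv_rhs => rw [← hA.transpose_sqrt_mul_sqrt, ← conjTranspose_eq_transpose_of_trivial,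
    l2_opNorm_conjTranspose_mul_self, Real.sqrt_mul_self (norm_nonneg _)]

lemma transpose_mul_mul_eq (hA : A.PosSemidef) {m : Type*} [Fintype m] (X : Matrix n m ℝ) :
    Xᵀ * A * X = (hA.sqrt * X)ᵀ * (hA.sqrt * X) := by
  conv_lhs => rw [← hA.sqrt_mul_self]
  rw [transpose_mul, hA.transpose_sqrt]
  simp only [Matrix.mul_assoc]

end Matrix.PosSemidef

lemma Matrix.PosDef.isUnit_det_sqrt {n : Type*} [Fintype n] [DecidableEq n] {A : Matrix n n ℝ}
    (hA : A.PosDef) : IsUnit hA.posSemidef.sqrt.det := by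
  have h : IsUnit (hA.posSemidef.sqrt.det * hA.posSemidef.sqrt.det) := by
    rw [← det_mul, hA.posSemidef.sqrt_mul_self]
    exact (isUnit_iff_isUnit_det A).mp hA.isUnit
  exact isUnit_of_mul_isUnit_left h

theorem stmt_18_general (p n : ℕ) (A : Matrix (Fin p) (Fin p) ℝ) (Q : Matrix (Fin n) (Fin n) ℝ)
    (hA : A.PosDef) (hQ : Q.PosSemidef) (Υ : Matrix (Fin p) (Fin n) ℝ)
    (hΥ : ((1 : Matrix (Fin n) (Fin n) ℝ) - Υᵀ * Υ).PosSemidef)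
    (Δ : Matrix (Fin p) (Fin n) ℝ) (lam γ : ℝ)
    (hlam : 0 ≤ lam) (hlamγ : lam ≤ γ) :
    (Q + (2 * γ * Real.sqrt (opNorm A) * Real.sqrt (opNorm Q) + γ ^ 2 * opNorm A) •
          (1 : Matrix (Fin n) (Fin n) ℝ) -
        ((hA.posSemidef.sqrt)⁻¹ * Υ * hQ.sqrt + (lam / opNorm Δ) • Δ)ᵀ * A *
          ((hA.posSemidef.sqrt)⁻¹ * Υ * hQ.sqrt + (lam / opNorm Δ) • Δ)).PosSemidef := by
  set S := hA.posSemidef.sqrt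
  set R := hQ.sqrt
  set E := (lam / opNorm Δ) • Δ
  have hSZ : S * (S⁻¹ * Υ * R + E) = Υ * R + S * E := by
    rw [Matrix.mul_add, Matrix.mul_assoc S⁻¹, mul_nonsing_inv_cancel_left _ _ hA.isUnit_det_sqrt]
  have hE : ‖S * E‖ ≤ γ * √‖A‖ := by
    calc ‖S * E‖ ≤ √‖A‖ * |lam| := by
          rw [← hA.posSemidef.l2_opNorm_sqrt]
          exact (l2_opNorm_mul S E).trans <|
            mul_le_mul_of_nonneg_left (norm_div_norm_smul_le lam Δ) (norm_nonneg _)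
      _ ≤ γ * √‖A‖ := by rw [abs_of_nonneg hlam, mul_comm]; gcongr
  have hbound := posSemidef_sub_transpose_mul_self_of_norm_mulVec_le (R := R)
    (mul_nonneg (hlam.trans hlamγ) (Real.sqrt_nonneg _))
    fun x ↦ (norm_mul_add_mulVec_le_of_posSemidef_one_sub hΥ R (S * E) x).trans (by gcongr)
  rw [hA.posSemidef.transpose_mul_mul_eq, hSZ]
  convert hbound using 4
  · exact hQ.transpose_sqrt_mul_sqrt.symm
  · rw [hQ.l2_opNorm_sqrt, mul_pow, Real.sq_sqrt (norm_nonneg _), opNorm_eq_l2_opNorm,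
      opNorm_eq_l2_opNorm]
    ring

/-- key norm estimate: if Z̄ = 𝐀^{-1/2}𝚼𝐐^{1/2} + (λ/‖Δ‖)Δ with
𝚼ᵀ𝚼 ⪯ I, 0 ≤ λ ≤ γ, Δ ≠ 0, then
Z̄ᵀ𝐀Z̄ ⪯ 𝐐 + (2γ‖𝐀‖^{1/2}‖𝐐‖^{1/2} + γ²‖𝐀‖) Iₙ. -/
theorem stmt_18 (p n : ℕ) (A : Matrix (Fin p) (Fin p) ℝ) (Q : Matrix (Fin n) (Fin n) ℝ)
    (hA : A.PosDef) (hQ : Q.PosSemidef) (Υ : Matrix (Fin p) (Fin n) ℝ)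
    (hΥ : ((1 : Matrix (Fin n) (Fin n) ℝ) - Υᵀ * Υ).PosSemidef)
    (Δ : Matrix (Fin p) (Fin n) ℝ) (hΔ : Δ ≠ 0) (lam γ : ℝ)
    (hlam : 0 ≤ lam) (hlamγ : lam ≤ γ) :
    (Q + (2 * γ * Real.sqrt (opNorm A) * Real.sqrt (opNorm Q) + γ ^ 2 * opNorm A) •
          (1 : Matrix (Fin n) (Fin n) ℝ) -
        ((hA.posSemidef.sqrt)⁻¹ * Υ * hQ.sqrt + (lam / opNorm Δ) • Δ)ᵀ * A *
          ((hA.posSemidef.sqrt)⁻¹ * Υ * hQ.sqrt + (lam / opNorm Δ) • Δ)).PosSemidef :=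
  stmt_18_general p n A Q hA hQ Υ hΥ Δ lam γ hlam hlamγ
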